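/- arXiv:1904.02692 — 3 statements merged into one kernel-verified Lean document; each statement's English description precedes it below -/
import Mathlib

section
/- Let k ≥ 2 be an integer and let n_A, n_B be positive integers. Let V_AB be a real symmetric (2n_A+2n_B)×(2n_A+2n_B) matrix satisfying V_AB ≥ iΩ_{n_A+n_B}. Suppose there exists a real symmetric 2n_B×2n_B matrix Δ with Δ ≥ iΩ_{n_B} such that the complex Hermitian matrix V_AB − (iΩ_{n_A} ⊕ ((1−1/k)·Δ + (i/k)·Ω_{n_B})) is positive semidefinite. Then the complex Hermitian matrix ((k+1)/(k−1))·V_AB − (iΩ_{n_A} ⊕ Δ) is positive semidefinite. (Consequently, the Gaussian state with QCM ((k+1)/(k−1))·V_AB is separable.) -/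
open Matrix Complex ComplexOrder

/-!
The target splits as the nonnegative combination
`((k+1)/(k-1)) V - (iΩ_A ⊕ Δ) = (k/(k-1)) (V - (iΩ_A ⊕ ((1-1/k)Δ + (i/k)Ω_B))) + (1/(k-1)) (V + iΩ)`.
The first summand is positive semidefinite by hypothesis, the second is the entrywise complex
conjugate of the positive semidefinite `V - iΩ`.
-/

/-- The standard symplectic form on `n` modes: block-diagonal with `n` blocks `[[0,1],[-1,0]]`. -/
noncomputable def OmegaM (n : ℕ) : Matrix (Fin (2*n)) (Fin (2*n)) ℝ :=
  Matrix.of fun i j =>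
    if i.val + 1 = j.val ∧ i.val % 2 = 0 then (1 : ℝ)
    else if j.val + 1 = i.val ∧ j.val % 2 = 0 then -1 else 0

/-- Complexification of a real matrix. -/
noncomputable def cplx {m p : Type*} (M : Matrix m p ℝ) : Matrix m p ℂ :=
  M.map (fun x => (x : ℂ))

theorem Matrix.PosSemidef.map_star {n R : Type*} [CommRing R] [PartialOrder R]
    [StarRing R] {M : Matrix n n R} (hM : M.PosSemidef) :
    (M.map star).PosSemidef :=
  hM.transpose.conjTranspose

lemma cplx_smul {m p : Type*} (c : ℝ) (M : Matrix m p ℝ) : cplx (c • M) = (c : ℂ) • cplx M := by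
  ext i j; simp [cplx]

lemma map_star_cplx_sub_I_smul {m p : Type*} (S A : Matrix m p ℝ) :
    (cplx S - I • cplx A).map star = cplx S + I • cplx A := by
  ext i j; simp [cplx]

lemma posSemidef_cplx_add_I_smul_of_sub {m : Type*} {S A : Matrix m m ℝ}
    (h : (cplx S - I • cplx A).PosSemidef) : (cplx S + I • cplx A).PosSemidef :=
  map_star_cplx_sub_I_smul S A ▸ h.map_star

lemma div_smul_sub_fromBlocks_eq {m n 𝕜 : Type*} [Field 𝕜] {k : 𝕜} (hk0 : k ≠ 0)
    (hk1 : k - 1 ≠ 0) (c : 𝕜) (V : Matrix (m ⊕ n) (m ⊕ n) 𝕜) (X : Matrix m m 𝕜)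
    (D Y : Matrix n n 𝕜) :
    ((k + 1) / (k - 1)) • V - fromBlocks (c • X) 0 0 D =
      (k / (k - 1)) • (V - fromBlocks (c • X) 0 0 ((1 - 1 / k) • D + (c / k) • Y)) +
        (1 / (k - 1)) • (V + c • fromBlocks X 0 0 Y) := by
  ext (i | i) (j | j) <;> simp [fromBlocks_smul] <;> field_simp <;> ring

theorem k_ext_implies_rescaled_separable_general
    (k nA nB : ℕ) (hk : 2 ≤ k)
    (V : Matrix (Fin (2*nA) ⊕ Fin (2*nB)) (Fin (2*nA) ⊕ Fin (2*nB)) ℝ)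
    (hbona : (cplx V -
      Complex.I • cplx (Matrix.fromBlocks (OmegaM nA) 0 0 (OmegaM nB))).PosSemidef)
    (Δ : Matrix (Fin (2*nB)) (Fin (2*nB)) ℝ)
    (h : (cplx V -
      Matrix.fromBlocks (Complex.I • cplx (OmegaM nA)) 0 0
        ((1 - 1/(k:ℂ)) • cplx Δ
          + (Complex.I/(k:ℂ)) • cplx (OmegaM nB))).PosSemidef) :
    (cplx ((((k:ℝ)+1)/((k:ℝ)-1)) • V) -
      Matrix.fromBlocks (Complex.I • cplx (OmegaM nA)) 0 0 (cplx Δ)).PosSemidef := by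
  have hk1 : (0 : ℝ) < k - 1 := by
    have : (2 : ℝ) ≤ k := by exact_mod_cast hk
    linarith
  have hk0C : (k : ℂ) ≠ 0 := by exact_mod_cast (by omega : k ≠ 0)
  have hk1C : (k : ℂ) - 1 ≠ 0 := by exact_mod_cast hk1.ne'
  have hconj :
      (cplx V + I • fromBlocks (cplx (OmegaM nA)) 0 0 (cplx (OmegaM nB))).PosSemidef := by
    simpa [cplx, fromBlocks_map] using posSemidef_cplx_add_I_smul_of_sub hbona
  rw [cplx_smul]
  push_cast
  rw [div_smul_sub_fromBlocks_eq hk0C hk1C]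
  refine (h.smul ?_).add (hconj.smul ?_)
  · simpa using Complex.zero_le_real.mpr (div_nonneg (Nat.cast_nonneg k) hk1.le)
  · simpa using Complex.zero_le_real.mpr (one_div_nonneg.mpr hk1.le)

/-- If the QCM `V_AB` of a state satisfies the `k`-extendibility SDP criterion with
witness `Δ`, then `((k+1)/(k−1))·V_AB ≥ iΩ_A ⊕ Δ`; consequently the Gaussian state
with QCM `((k+1)/(k−1))·V_AB` is separable. -/
theorem k_ext_implies_rescaled_separable
    (k nA nB : ℕ) (hk : 2 ≤ k) (hnA : 0 < nA) (hnB : 0 < nB)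
    (V : Matrix (Fin (2*nA) ⊕ Fin (2*nB)) (Fin (2*nA) ⊕ Fin (2*nB)) ℝ)
    (hV : V.IsSymm)
    (hbona : (cplx V -
      Complex.I • cplx (Matrix.fromBlocks (OmegaM nA) 0 0 (OmegaM nB))).PosSemidef)
    (Δ : Matrix (Fin (2*nB)) (Fin (2*nB)) ℝ) (hΔ : Δ.IsSymm)
    (hΔbona : (cplx Δ - Complex.I • cplx (OmegaM nB)).PosSemidef)
    (h : (cplx V -
      Matrix.fromBlocks (Complex.I • cplx (OmegaM nA)) 0 0
        ((1 - 1/(k:ℂ)) • cplx Δ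
          + (Complex.I/(k:ℂ)) • cplx (OmegaM nB))).PosSemidef) :
    (cplx ((((k:ℝ)+1)/((k:ℝ)-1)) • V) -
      Matrix.fromBlocks (Complex.I • cplx (OmegaM nA)) 0 0 (cplx Δ)).PosSemidef :=
  k_ext_implies_rescaled_separable_general k nA nB hk V hbona Δ h
end

section
/- Let n_A, n_B be positive integers and let V_AB be a real symmetric (2n_A+2n_B)×(2n_A+2n_B) matrix with V_AB ≥ iΩ_{n_A+n_B}. Suppose that for every integer k ≥ 2 there exists a real symmetric 2n_B×2n_B matrix Δ_k with Δ_k ≥ iΩ_{n_B} such that the complex Hermitian matrix V_AB − (iΩ_{n_A} ⊕ ((1−1/k)·Δ_k + (i/k)·Ω_{n_B})) is positive semidefinite. Then there exists a real symmetric 2n_B×2n_B matrix Δ with Δ ≥ iΩ_{n_B} such that the complex Hermitian matrix V_AB − (iΩ_{n_A} ⊕ Δ) is positive semidefinite. -/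
/-!
Every `Δ_k` is positive semidefinite as a real matrix (it is the real part of `Δ_k - iΩ ≥ 0`), and
the `(B, B)` diagonal of the `k`-extendibility condition gives `(1 - 1/k) (Δ_k)ᵢᵢ ≤ Vᵢᵢ`. Hence
the `Δ_k` lie in a compact box, and a subsequence converges to some `Δ`. All three conditions are
closed in `(1/k, Δ_k)`, so they pass to the limit `1/k → 0`.
-/

open Matrix Complex ComplexOrder

open Filter Topology

namespace Matrix

variable {m n : Type*}

instance {α : Type*} [TopologicalSpace α] [FirstCountableTopology α] [Countable m] [Countable n] :
    FirstCountableTopology (Matrix m n α) :=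
  inferInstanceAs (FirstCountableTopology (m → n → α))

theorem isClosed_setOf_isSymm {α : Type*} [TopologicalSpace α] [T2Space α] :
    IsClosed {A : Matrix n n α | A.IsSymm} :=
  isClosed_eq continuous_id.matrix_transpose continuous_id

theorem isCompact_setOf_abs_apply_le (b : m → n → ℝ) :
    IsCompact {A : Matrix m n ℝ | ∀ i j, |A i j| ≤ b i j} := by
  have h : {A : m → n → ℝ | ∀ i j, |A i j| ≤ b i j} = Set.Icc (-b) b := by
    ext A
    simp only [Set.mem_ofPred_eq, abs_le, Set.mem_Icc, Pi.le_def, Pi.neg_apply, forall_and]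
  exact (h ▸ isCompact_Icc : IsCompact {A : m → n → ℝ | ∀ i j, |A i j| ≤ b i j})

variable [Fintype n]

theorem isClosed_setOf_posSemidef {𝕜 : Type*} [RCLike 𝕜] :
    IsClosed {A : Matrix n n 𝕜 | A.PosSemidef} := by
  simp only [posSemidef_iff_dotProduct_mulVec, Set.ofPred_and, Set.ofPred_forall]
  exact (isClosed_eq continuous_id.matrix_conjTranspose continuous_id).inter <|
    isClosed_iInter fun x => isClosed_le continuous_const
      (continuous_const.dotProduct (continuous_id.matrix_mulVec continuous_const))

theorem PosSemidef.map_re {A : Matrix n n ℂ} (hA : A.PosSemidef) : (A.map re).PosSemidef := by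
  refine posSemidef_iff_dotProduct_mulVec.mpr ⟨?_, fun x => ?_⟩
  · ext i j
    simp [← hA.isHermitian.apply i j]
  · have h := (Complex.le_def.mp (hA.dotProduct_mulVec_nonneg (fun i => (x i : ℂ)))).1
    simpa [dotProduct, mulVec, Finset.mul_sum, re_sum, mul_assoc] using h

theorem PosSemidef.two_mul_abs_apply_le [DecidableEq n] {A : Matrix n n ℝ} (hA : A.PosSemidef)
    (i j : n) : 2 * |A i j| ≤ A i i + A j j := by
  have key (s : ℝ) : 0 ≤ A i i + 2 * s * A i j + s ^ 2 * A j j := by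
    have := hA.dotProduct_mulVec_nonneg (Pi.single i 1 + Pi.single j s)
    simp only [star_trivial, mulVec_add, mulVec_single, MulOpposite.op_one, one_smul,
      op_smul_eq_smul, dotProduct_add, add_dotProduct, single_dotProduct, col_apply, one_mul,
      dotProduct_smul, smul_eq_mul] at this
    rw [show A j i = A i j by simpa using hA.isHermitian.apply i j] at this
    linarith
  cases abs_cases (A i j) <;> linarith [key 1, key (-1)]

end Matrix

theorem OmegaM_apply_self (n : ℕ) (i : Fin (2 * n)) : OmegaM n i i = 0 := by
  simp only [OmegaM, of_apply]
  rw [if_neg, if_neg] <;> omega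

theorem map_re_cplx_sub_I_smul_cplx {m p : Type*} (A B : Matrix m p ℝ) :
    (cplx A - I • cplx B).map re = A := by
  ext i j
  simp [cplx]

section Extension

variable {nA nB k : ℕ} {V : Matrix (Fin (2*nA) ⊕ Fin (2*nB)) (Fin (2*nA) ⊕ Fin (2*nB)) ℝ}
  {D : Matrix (Fin (2*nB)) (Fin (2*nB)) ℝ}

theorem apply_self_le_of_posSemidef_ext (hk : 2 ≤ k) (hD : D.PosSemidef)
    (hext : (cplx V - fromBlocks (I • cplx (OmegaM nA)) 0 0
      ((1 - 1/(k:ℂ)) • cplx D + (I/(k:ℂ)) • cplx (OmegaM nB))).PosSemidef)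
    (i : Fin (2*nB)) : D i i ≤ 2 * V (.inr i) (.inr i) := by
  have h : (1 - (k : ℝ)⁻¹) * D i i ≤ V (.inr i) (.inr i) := by
    simpa [cplx, OmegaM_apply_self] using hext.map_re.diag_nonneg (i := .inr i)
  have hk : (k : ℝ)⁻¹ ≤ 2⁻¹ := inv_anti₀ two_pos (by exact_mod_cast hk)
  nlinarith [hD.diag_nonneg (i := i)]

theorem abs_apply_le_of_posSemidef_ext (hk : 2 ≤ k)
    (hD : (cplx D - I • cplx (OmegaM nB)).PosSemidef)
    (hext : (cplx V - fromBlocks (I • cplx (OmegaM nA)) 0 0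
      ((1 - 1/(k:ℂ)) • cplx D + (I/(k:ℂ)) • cplx (OmegaM nB))).PosSemidef)
    (i j : Fin (2*nB)) : |D i j| ≤ V (.inr i) (.inr i) + V (.inr j) (.inr j) := by
  have hD : D.PosSemidef := by simpa only [map_re_cplx_sub_I_smul_cplx] using hD.map_re
  linarith [hD.two_mul_abs_apply_le i j, apply_self_le_of_posSemidef_ext hk hD hext i,
    apply_self_le_of_posSemidef_ext hk hD hext j]

end Extension

theorem all_k_ext_implies_separable_general
    (nA nB : ℕ)
    (V : Matrix (Fin (2*nA) ⊕ Fin (2*nB)) (Fin (2*nA) ⊕ Fin (2*nB)) ℝ)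
    (h : ∀ k : ℕ, 2 ≤ k →
      ∃ Δk : Matrix (Fin (2*nB)) (Fin (2*nB)) ℝ, Δk.IsSymm ∧
        (cplx Δk - Complex.I • cplx (OmegaM nB)).PosSemidef ∧
        (cplx V -
          Matrix.fromBlocks (Complex.I • cplx (OmegaM nA)) 0 0
            ((1 - 1/(k:ℂ)) • cplx Δk
              + (Complex.I/(k:ℂ)) • cplx (OmegaM nB))).PosSemidef) :
    ∃ Δ : Matrix (Fin (2*nB)) (Fin (2*nB)) ℝ, Δ.IsSymm ∧
      (cplx Δ - Complex.I • cplx (OmegaM nB)).PosSemidef ∧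
      (cplx V -
        Matrix.fromBlocks (Complex.I • cplx (OmegaM nA)) 0 0 (cplx Δ)).PosSemidef := by
  choose D hDsymm hDpsd hDext using fun k : ℕ => h (k + 2) (by omega)
  obtain ⟨L, -, φ, hφ, hlim⟩ := (isCompact_setOf_abs_apply_le _).tendsto_subseq
    fun k => abs_apply_le_of_posSemidef_ext (by omega) (hDpsd k) (hDext k)
  have ht : Tendsto (fun k => 1 / ((φ k + 2 : ℕ) : ℂ)) atTop (𝓝 0) :=
    tendsto_one_div_atTop_nhds_zero_nat.comp ((tendsto_add_atTop_nat 2).comp hφ.tendsto_atTop)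
  have hcontExt : Continuous fun p : ℂ × Matrix (Fin (2*nB)) (Fin (2*nB)) ℝ =>
      cplx V - fromBlocks (I • cplx (OmegaM nA)) 0 0
        ((1 - p.1) • cplx p.2 + (I * p.1) • cplx (OmegaM nB)) := by
    unfold cplx
    fun_prop
  have hcontΔ : Continuous fun M : Matrix (Fin (2*nB)) (Fin (2*nB)) ℝ =>
      cplx M - I • cplx (OmegaM nB) := by
    unfold cplx
    fun_prop
  refine ⟨L, isClosed_setOf_isSymm.mem_of_tendsto hlim (.of_forall fun k => hDsymm (φ k)),
    (isClosed_setOf_posSemidef.preimage hcontΔ).mem_of_tendsto hlim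
      (.of_forall fun k => hDpsd (φ k)), ?_⟩
  simpa using (isClosed_setOf_posSemidef.preimage hcontExt).mem_of_tendsto (ht.prodMk_nhds hlim)
    (.of_forall fun k => by
      simpa only [Set.mem_preimage, Set.mem_ofPred_eq, Function.comp_apply, mul_one_div] using
        hDext (φ k))

/-- If the `k`-extendibility SDP criterion holds for every `k ≥ 2`, then the Gaussian
separability criterion holds: there is a real symmetric `Δ ≥ iΩ_B` with
`V_AB ≥ iΩ_A ⊕ Δ`. -/
theorem all_k_ext_implies_separable
    (nA nB : ℕ) (hnA : 0 < nA) (hnB : 0 < nB)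
    (V : Matrix (Fin (2*nA) ⊕ Fin (2*nB)) (Fin (2*nA) ⊕ Fin (2*nB)) ℝ)
    (hV : V.IsSymm)
    (hbona : (cplx V -
      Complex.I • cplx (Matrix.fromBlocks (OmegaM nA) 0 0 (OmegaM nB))).PosSemidef)
    (h : ∀ k : ℕ, 2 ≤ k →
      ∃ Δk : Matrix (Fin (2*nB)) (Fin (2*nB)) ℝ, Δk.IsSymm ∧
        (cplx Δk - Complex.I • cplx (OmegaM nB)).PosSemidef ∧
        (cplx V -
          Matrix.fromBlocks (Complex.I • cplx (OmegaM nA)) 0 0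
            ((1 - 1/(k:ℂ)) • cplx Δk
              + (Complex.I/(k:ℂ)) • cplx (OmegaM nB))).PosSemidef) :
    ∃ Δ : Matrix (Fin (2*nB)) (Fin (2*nB)) ℝ, Δ.IsSymm ∧
      (cplx Δ - Complex.I • cplx (OmegaM nB)).PosSemidef ∧
      (cplx V -
        Matrix.fromBlocks (Complex.I • cplx (OmegaM nA)) 0 0 (cplx Δ)).PosSemidef :=
  all_k_ext_implies_separable_general nA nB V h
end

section
/- Let n be a positive integer and let Δ be a real symmetric 2n×2n matrix with Δ ≥ iΩ_n. Then for every vector v ∈ ℂ^{2n} with ‖v‖ = 1, one has ⟨v, Δv⟩ · ⟨v, Ω_n Δ Ω_nᵀ v⟩ ≥ 1, where ⟨·,·⟩ denotes the standard Hermitian inner product on ℂ^{2n} (both inner products are real since Δ and Ω_n Δ Ω_nᵀ are real symmetric). -/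
/-!
Transposing `Δ - iΩ ≥ 0` gives `Δ + iΩ ≥ 0`. The difference of these two positive semidefinite
matrices is `2iΩ` and their sum is `2Δ`, so Cauchy–Schwarz for each of them, combined by
Cauchy–Schwarz in `ℝ²`, gives `|⟨x, Ω y⟩|² ≤ ⟨x, Δ x⟩ ⟨y, Δ y⟩`. For `x = v` and `y = Ωᵀ v` the
left side is `|⟨v, v⟩|² = 1` because `Ω` is orthogonal, and `⟨y, Δ y⟩ = ⟨v, Ω Δ Ωᵀ v⟩`.
-/

open Matrix Complex ComplexOrder

theorem add_sq_le_add_mul_add {α β p q r s : ℝ} (hα : 0 ≤ α) (hβ : 0 ≤ β) (hp : 0 ≤ p)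
    (hq : 0 ≤ q) (hr : 0 ≤ r) (hs : 0 ≤ s) (h₁ : α ^ 2 ≤ p * q) (h₂ : β ^ 2 ≤ r * s) :
    (α + β) ^ 2 ≤ (p + r) * (q + s) := by
  have hαβ : 2 * (α * β) ≤ p * s + r * q := by
    refine (pow_le_pow_iff_left₀ (by positivity) (by positivity) two_ne_zero).mp ?_
    nlinarith [mul_le_mul h₁ h₂ (sq_nonneg β) (mul_nonneg hp hq), sq_nonneg (p * s - r * q)]
  nlinarith

namespace Matrix

namespace PosSemidef

variable {m 𝕜 : Type*} [Fintype m] [RCLike 𝕜] {P Q : Matrix m m 𝕜}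

theorem norm_dotProduct_mulVec_sq_le (hP : P.PosSemidef) (x y : m → 𝕜) :
    ‖star x ⬝ᵥ (P *ᵥ y)‖ ^ 2 ≤
      RCLike.re (star x ⬝ᵥ (P *ᵥ x)) * RCLike.re (star y ⬝ᵥ (P *ᵥ y)) := by
  let _ := P.toSeminormedAddCommGroup hP
  let _ := P.toInnerProductSpace hP
  have h := inner_mul_inner_self_le (𝕜 := 𝕜) x y
  rw [norm_inner_symm y x, ← sq] at h
  rw [dotProduct_comm (star x), dotProduct_comm (star x), dotProduct_comm (star y)]
  exact h

theorem norm_dotProduct_sub_mulVec_sq_le (hP : P.PosSemidef) (hQ : Q.PosSemidef)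
    (x y : m → 𝕜) :
    ‖star x ⬝ᵥ ((P - Q) *ᵥ y)‖ ^ 2 ≤
      RCLike.re (star x ⬝ᵥ ((P + Q) *ᵥ x)) * RCLike.re (star y ⬝ᵥ ((P + Q) *ᵥ y)) := by
  simp only [sub_mulVec, add_mulVec, dotProduct_sub, dotProduct_add, map_add]
  calc ‖star x ⬝ᵥ (P *ᵥ y) - star x ⬝ᵥ (Q *ᵥ y)‖ ^ 2
      ≤ (‖star x ⬝ᵥ (P *ᵥ y)‖ + ‖star x ⬝ᵥ (Q *ᵥ y)‖) ^ 2 := by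
        gcongr
        exact norm_sub_le _ _
    _ ≤ _ := add_sq_le_add_mul_add (norm_nonneg _) (norm_nonneg _)
        (hP.re_dotProduct_nonneg x) (hP.re_dotProduct_nonneg y)
        (hQ.re_dotProduct_nonneg x) (hQ.re_dotProduct_nonneg y)
        (hP.norm_dotProduct_mulVec_sq_le x y) (hQ.norm_dotProduct_mulVec_sq_le x y)

end PosSemidef

theorem norm_dotProduct_mulVec_sq_le_of_posSemidef_sub_add {m : Type*} [Fintype m]
    {D K : Matrix m m ℂ} (hsub : (D - I • K).PosSemidef) (hadd : (D + I • K).PosSemidef)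
    (x y : m → ℂ) :
    ‖star x ⬝ᵥ (K *ᵥ y)‖ ^ 2 ≤ (star x ⬝ᵥ (D *ᵥ x)).re * (star y ⬝ᵥ (D *ᵥ y)).re := by
  have h := hadd.norm_dotProduct_sub_mulVec_sq_le hsub x y
  rw [add_sub_sub_cancel, add_add_sub_cancel, ← two_smul ℂ, ← two_smul ℂ, smul_smul] at h
  simp only [smul_mulVec, dotProduct_smul, smul_eq_mul, norm_mul, mul_pow,
    RCLike.re_to_complex] at h
  norm_num at h
  linarith

end Matrix

theorem OmegaM_transpose (n : ℕ) : (OmegaM n)ᵀ = -OmegaM n := by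
  ext i j
  simp only [OmegaM, transpose_apply, of_apply, Matrix.neg_apply]
  split_ifs <;> first | (exfalso; omega) | norm_num

theorem OmegaM_mul_transpose (n : ℕ) : OmegaM n * (OmegaM n)ᵀ = 1 := by
  ext i j
  -- the only nonzero entry of row `i` sits in the column of its partner coordinate
  have hk : (if i.val % 2 = 0 then i.val + 1 else i.val - 1) < 2 * n := by split_ifs <;> omega
  rw [mul_apply, Finset.sum_eq_single ⟨_, hk⟩]
  · simp only [OmegaM, transpose_apply, of_apply, one_apply, Fin.ext_iff]
    split_ifs <;> first | (exfalso; omega) | norm_num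
  · intro k _ hki
    simp only [OmegaM, transpose_apply, of_apply, ne_eq, Fin.ext_iff] at hki ⊢
    split_ifs at hki ⊢ <;> first | (exfalso; omega) | norm_num
  · simp

section cplx

variable {l m p : Type*}

theorem cplx_transpose (M : Matrix m p ℝ) : cplx Mᵀ = (cplx M)ᵀ := rfl

theorem cplx_neg (M : Matrix m p ℝ) : cplx (-M) = -cplx M := M.map_neg _ ofReal_neg

theorem cplx_mul [Fintype m] (M : Matrix l m ℝ) (N : Matrix m p ℝ) :
    cplx (M * N) = cplx M * cplx N :=
  Matrix.map_mul (f := ofRealHom)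

theorem cplx_one [Fintype m] [DecidableEq m] : cplx (1 : Matrix m m ℝ) = 1 :=
  Matrix.map_one _ ofReal_zero ofReal_one

theorem star_cplx_mulVec [Fintype p] (M : Matrix m p ℝ) (v : p → ℂ) :
    star (cplx M *ᵥ v) = star v ᵥ* cplx Mᵀ := by
  rw [star_mulVec]
  congr 1
  ext i j
  simp [cplx]

theorem dotProduct_cplx_mul_mul_transpose_mulVec [Fintype m] [Fintype p] (A : Matrix m p ℝ)
    (B : Matrix p p ℝ) (v : m → ℂ) :
    star v ⬝ᵥ (cplx (A * B * Aᵀ) *ᵥ v) = star (cplx Aᵀ *ᵥ v) ⬝ᵥ (cplx B *ᵥ (cplx Aᵀ *ᵥ v)) := by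
  rw [cplx_mul, cplx_mul, ← mulVec_mulVec, ← mulVec_mulVec, dotProduct_mulVec,
    star_cplx_mulVec, transpose_transpose]

end cplx

theorem product_inequality_general
    (n : ℕ) (Δ : Matrix (Fin (2*n)) (Fin (2*n)) ℝ)
    (hΔsymm : Δ.IsSymm)
    (h : (cplx Δ - Complex.I • cplx (OmegaM n)).PosSemidef) :
    ∀ v : Fin (2*n) → ℂ, star v ⬝ᵥ v = 1 →
      1 ≤ (star v ⬝ᵥ (cplx Δ *ᵥ v)).re *
            (star v ⬝ᵥ (cplx (OmegaM n * Δ * (OmegaM n)ᵀ) *ᵥ v)).re := by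
  intro v hv
  have hadd : (cplx Δ + I • cplx (OmegaM n)).PosSemidef := by
    have h' := h.transpose
    rwa [transpose_sub, transpose_smul, ← cplx_transpose, ← cplx_transpose, hΔsymm.eq,
      OmegaM_transpose, cplx_neg, smul_neg, sub_neg_eq_add] at h'
  have hpair : star v ⬝ᵥ (cplx (OmegaM n) *ᵥ (cplx (OmegaM n)ᵀ *ᵥ v)) = 1 := by
    rw [mulVec_mulVec, ← cplx_mul, OmegaM_mul_transpose, cplx_one, one_mulVec, hv]
  have key := norm_dotProduct_mulVec_sq_le_of_posSemidef_sub_add h hadd v (cplx (OmegaM n)ᵀ *ᵥ v)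
  rwa [hpair, norm_one, one_pow, ← dotProduct_cplx_mul_mul_transpose_mulVec] at key

/-- If `Δ ≥ iΩ_n`, then for every unit vector `v ∈ ℂ^{2n}` one has
`⟨v, Δv⟩ · ⟨v, ΩΔΩᵀ v⟩ ≥ 1` (both inner products being real). -/
theorem product_inequality
    (n : ℕ) (hn : 0 < n) (Δ : Matrix (Fin (2*n)) (Fin (2*n)) ℝ)
    (hΔsymm : Δ.IsSymm)
    (h : (cplx Δ - Complex.I • cplx (OmegaM n)).PosSemidef) :
    ∀ v : Fin (2*n) → ℂ, star v ⬝ᵥ v = 1 →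
      1 ≤ (star v ⬝ᵥ (cplx Δ *ᵥ v)).re *
            (star v ⬝ᵥ (cplx (OmegaM n * Δ * (OmegaM n)ᵀ) *ᵥ v)).re :=
  product_inequality_general n Δ hΔsymm h
end
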